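/- Let 1/2 < η < 1 and let V_η : ℝ⁴ → ℝ⁴ be the Wolbachia gonosomal operator V_η(x₁,x₂,x₃,u) = (η x₁ u + (η/2) x₃ u, (1/2) x₂ u + ((1−η)/2) x₃ u, (η/2) x₃ u, (1−η) x₁ u + (1/2) x₂ u + ((1−η)/2) x₃ u). Then the set of non-zero fixed points of V_η is exactly { (2/(2−η), 2/(2−η), −2/(2−η), 2/η), (0,2,0,2), (1/(1−η), 0, 0, 1/η) }. -/
import Mathlib


/-- The Wolbachia gonosomal operator with parameter `η`. -/
noncomputable def wolbOp (η : ℝ) (p : ℝ × ℝ × ℝ × ℝ) : ℝ × ℝ × ℝ × ℝ :=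
  (η * p.1 * p.2.2.2 + (η / 2) * p.2.2.1 * p.2.2.2,
   (1 / 2) * p.2.1 * p.2.2.2 + ((1 - η) / 2) * p.2.2.1 * p.2.2.2,
   (η / 2) * p.2.2.1 * p.2.2.2,
   (1 - η) * p.1 * p.2.2.2 + (1 / 2) * p.2.1 * p.2.2.2 + ((1 - η) / 2) * p.2.2.1 * p.2.2.2)

theorem wolbOp_fixed_points (η : ℝ) (h1 : 1 / 2 < η) (h2 : η < 1) :
    {p : ℝ × ℝ × ℝ × ℝ | wolbOp η p = p ∧ p ≠ 0} =
      {(2 / (2 - η), 2 / (2 - η), -2 / (2 - η), 2 / η), (0, 2, 0, 2),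
        (1 / (1 - η), 0, 0, 1 / η)} := by
  have hη : η ≠ 0 := by linarith
  have h2η : (2 : ℝ) - η ≠ 0 := by intro h; linarith
  have h1η : (1 : ℝ) - η ≠ 0 := by intro h; linarith
  ext ⟨x, y, z, u⟩
  simp only [Set.mem_setOf_eq, Set.mem_insert_iff, Set.mem_singleton_iff, wolbOp,
    Prod.mk.injEq, ne_eq, Prod.ext_iff, Prod.fst_zero, Prod.snd_zero, not_and]
  constructor
  · rintro ⟨⟨e1, e2, e3, e4⟩, hne⟩
    by_cases hz : z = 0
    · by_cases hx : x = 0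
      · by_cases hy : y = 0
        · exfalso
          apply hne hx hy hz
          subst hx hy hz
          linarith [e4]
        · -- u = 2, y = 2
          have hu : u = 2 := by
            have h := mul_eq_zero.mp (show y * (u - 2) = 0 by
              subst hz; linear_combination 2 * e2)
            rcases h with h | h
            · exact absurd h hy
            · linarith
          right; left
          subst hu hz hx
          refine ⟨rfl, ?_, rfl, rfl⟩
          linarith [e4]
      · -- u = 1/η, y = 0, x = 1/(1-η)
        have hu : η * u = 1 := by
          have h := mul_eq_zero.mp (show x * (η * u - 1) = 0 by
            subst hz; linear_combination e1)
          rcases h with h | h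
          · exact absurd h hx
          · linarith
        have hy : y = 0 := by
          have h := mul_eq_zero.mp (show y * (u - 2) = 0 by
            subst hz; linear_combination 2 * e2)
          rcases h with h | h
          · exact h
          · exfalso
            have hu2 : u = 2 := by linarith
            rw [hu2] at hu
            linarith
        right; right
        subst hz hy
        refine ⟨?_, rfl, rfl, ?_⟩
        · -- x = 1/(1-η) from e4: (1-η)*x*u = u, with η*u = 1 so u ≠ 0
          have hu0 : u ≠ 0 := by
            intro h; rw [h] at hu; simp at hu
          field_simp
          have h5 : (1 - η) * x * u = u := by linarith [e4]
          have := mul_right_cancel₀ hu0 (by linarith [h5] : (1 - η) * x * u = 1 * u)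
          linarith [this]
        · field_simp
          linarith [hu]
    · -- z ≠ 0 : u = 2/η, z = -x, y = x, x = 2/(2-η)
      have hu : η * u = 2 := by
        have h := mul_eq_zero.mp (show z * (η * u - 2) = 0 by linear_combination 2 * e3)
        rcases h with h | h
        · exact absurd h hz
        · linarith
      have hzx : z = -x := by linear_combination e1 - (x + z / 2) * hu
      have hyx : y = x := by
        have h := mul_eq_zero.mp (show (1 - η) * (y - x) = 0 by
          linear_combination η * e2 - (y / 2 + (1 - η) * z / 2) * hu - (1 - η) * hzx)
        rcases h with h | h
        · exact absurd h h1η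
        · linarith
      have hx : x = 2 / (2 - η) := by
        have h : (2 - η) * x = 2 := by
          linear_combination η * e4 - ((1 - η) * x + y / 2 + (1 - η) * z / 2 - 1) * hu
            - (1 - η) * hzx - hyx
        field_simp
        linarith [h]
      left
      refine ⟨hx, by rw [hyx, hx], by rw [hzx, hx]; ring, ?_⟩
      field_simp
      linarith [hu]
  · rintro (⟨hx, hy, hz, hu⟩ | ⟨hx, hy, hz, hu⟩ | ⟨hx, hy, hz, hu⟩) <;>
      subst hx hy hz hu
    · refine ⟨⟨?_, ?_, ?_, ?_⟩, fun _ _ _ h => ?_⟩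
      · field_simp; try ring
      · field_simp; try ring
      · field_simp; try ring
      · field_simp; try ring
      · rw [div_eq_zero_iff] at h
        rcases h with h | h <;> norm_num at h <;> exact hη h
    · exact ⟨⟨by ring, by ring, by ring, by ring⟩, fun _ _ _ h => by norm_num at h⟩
    · refine ⟨⟨?_, ?_, ?_, ?_⟩, fun _ _ _ h => ?_⟩
      · field_simp; try ring
      · ring
      · ring
      · field_simp; try ring
      · rw [div_eq_zero_iff] at h
        rcases h with h | h <;> norm_num at h <;> exact hη h
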